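/- Let F be a field, let A be a β×α matrix and B a β×γ matrix over F, partitioned as Aᵀ = [A_0ᵀ … A_{p−1}ᵀ] and B = [B_0; …; B_{p−1}] with conformal blocks. Then Aᵀ·B = Σ_{l=0}^{p−1} A_lᵀ·B_l. Moreover, for any x ∈ F, Aᵀ·B equals the coefficient of x^{p−1} in the polynomial (Σ_{l=0}^{p−1} x^l A_lᵀ)·(Σ_{l=0}^{p−1} x^{p−1−l} B_l), viewed as a matrix polynomial in x. -/

import Mathlib

/-!
Multiplying the row-stacked blocks sums over the block index. In the product of the matrix
polynomials, the term `x^l A_lᵀ · x^(p-1-k) B_k` lands in degree `p - 1` exactly when `l = k`,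
so that coefficient is the same diagonal sum `Σ_l A_lᵀ B_l`.
-/

open Polynomial Matrix

theorem Polynomial.coeff_C_mul_X_pow_mul_C_mul_X_pow {R : Type*} [CommSemiring R] (a b : R)
    (i j N : ℕ) : (C a * X ^ i * (C b * X ^ j)).coeff N = if N = i + j then a * b else 0 := by
  rw [mul_mul_mul_comm, ← pow_add, ← C_mul, coeff_C_mul_X_pow]

namespace Matrix

variable {ι κ m n o R : Type*}

def stackRows (A : ι → Matrix κ m R) : Matrix (ι × κ) m R :=
  of fun i j => A i.1 i.2 j

theorem stackRows_transpose_mul_stackRows [Fintype ι] [Fintype κ] [NonUnitalNonAssocSemiring R]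
    (A : ι → Matrix κ m R) (B : ι → Matrix κ n R) :
    (stackRows A)ᵀ * stackRows B = ∑ l, (A l)ᵀ * B l := by
  ext i j
  simp only [mul_apply, sum_apply, Fintype.sum_prod_type, transpose_apply, stackRows, of_apply]

theorem map_coeff_sum [CommSemiring R] (s : Finset ι) (M : ι → Matrix m n R[X]) (N : ℕ) :
    (∑ l ∈ s, M l).map (coeff · N) = ∑ l ∈ s, (M l).map (coeff · N) :=
  map_sum (lcoeff R N).mapMatrix M s

theorem map_coeff_mul_map_C_mul_X_pow [Fintype n] [CommSemiring R]
    (P : Matrix m n R) (Q : Matrix n o R) (i j N : ℕ) :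
    ((P.map fun a => C a * X ^ i) * Q.map fun b => C b * X ^ j).map (coeff · N) =
      if N = i + j then P * Q else 0 := by
  ext r s
  by_cases h : N = i + j <;>
    simp [h, mul_apply, finsetSum_coeff, coeff_C_mul_X_pow_mul_C_mul_X_pow]

theorem map_coeff_sum_mul_sum_eq_sum_mul [Fintype ι] [Fintype n] [CommSemiring R]
    (P : ι → Matrix m n R) (Q : ι → Matrix n o R) (e f : ι → ℕ) (N : ℕ)
    (hN : ∀ l k, N = e l + f k ↔ l = k) :
    ((∑ l, (P l).map fun a => C a * X ^ e l) * ∑ k, (Q k).map fun b => C b * X ^ f k).map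
        (coeff · N) =
      ∑ l, P l * Q l := by
  classical
  simp only [Matrix.sum_mul, Matrix.mul_sum, map_coeff_sum, map_coeff_mul_map_C_mul_X_pow, hN,
    Finset.sum_ite_eq', Finset.mem_univ, if_true]

end Matrix

theorem matdot_matrix_correctness_general (F : Type*) [Field F] (p b α γ : ℕ)
    (A : Fin p → Matrix (Fin b) (Fin α) F) (B : Fin p → Matrix (Fin b) (Fin γ) F) :
    (Matrix.of (fun (i : Fin p × Fin b) (j : Fin α) => A i.1 i.2 j))ᵀ *
        (Matrix.of (fun (i : Fin p × Fin b) (j : Fin γ) => B i.1 i.2 j))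
      = ∑ l, (A l)ᵀ * B l ∧
    ((∑ l, ((A l)ᵀ).map (fun a => (C a) * (X : F[X]) ^ (l : ℕ))) *
        (∑ l, (B l).map (fun b' => (C b') * (X : F[X]) ^ (p - 1 - (l : ℕ))))).map
          (fun q => q.coeff (p - 1))
      = (Matrix.of (fun (i : Fin p × Fin b) (j : Fin α) => A i.1 i.2 j))ᵀ *
          (Matrix.of (fun (i : Fin p × Fin b) (j : Fin γ) => B i.1 i.2 j)) := by
  have hblocks := stackRows_transpose_mul_stackRows A B
  have hdegree (l k : Fin p) : p - 1 = (l : ℕ) + (p - 1 - k) ↔ l = k := by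
    rw [Fin.ext_iff]
    omega
  exact ⟨hblocks, (map_coeff_sum_mul_sum_eq_sum_mul _ B _ _ _ hdegree).trans hblocks.symm⟩

/-- MatDot correctness: with block partitions Aᵀ = [A_0ᵀ … A_{p−1}ᵀ] and
B = [B_0; …; B_{p−1}], we have AᵀB = Σ A_lᵀ B_l, and AᵀB is the coefficient of
x^(p−1) in (Σ x^l A_lᵀ)(Σ x^(p−1−l) B_l). -/
theorem matdot_matrix_correctness (F : Type*) [Field F] (p b α γ : ℕ) (hp : 0 < p)
    (A : Fin p → Matrix (Fin b) (Fin α) F) (B : Fin p → Matrix (Fin b) (Fin γ) F) :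
    (Matrix.of (fun (i : Fin p × Fin b) (j : Fin α) => A i.1 i.2 j))ᵀ *
        (Matrix.of (fun (i : Fin p × Fin b) (j : Fin γ) => B i.1 i.2 j))
      = ∑ l, (A l)ᵀ * B l ∧
    ((∑ l, ((A l)ᵀ).map (fun a => (C a) * (X : F[X]) ^ (l : ℕ))) *
        (∑ l, (B l).map (fun b' => (C b') * (X : F[X]) ^ (p - 1 - (l : ℕ))))).map
          (fun q => q.coeff (p - 1))
      = (Matrix.of (fun (i : Fin p × Fin b) (j : Fin α) => A i.1 i.2 j))ᵀ *
          (Matrix.of (fun (i : Fin p × Fin b) (j : Fin γ) => B i.1 i.2 j)) :=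
  matdot_matrix_correctness_general F p b α γ A B
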